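/- Under the perturbation setup (F Morse-non-degenerate, |G − F| ≤ η ≤ η⋄, θ_i(p̂) the continued critical points), for every real p̂ ∈ D̂, the function θ ↦ G(θ,p̂) has no critical points other than θ₁(p̂), …, θ_{2N}(p̂): if θ♯ ∈ (θ_{2N}(p̂) − 2π, θ_{2N}(p̂)] satisfies ∂_θ G(θ♯, p̂) = 0, then θ♯ = θ_i(p̂) for some i ∈ {1,…,2N}. -/

import Mathlib

noncomputable section

open Complex Set

/-- The complex strip of half-width `s` (a fundamental domain of the complexified torus `𝕋_s`). -/
def Strip (s : ℝ) : Set ℂ := {z : ℂ | |z.im| < s}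

/-- Complex `ρ`-neighborhood of the closed real interval `[a,b]`. -/
def IccNbhd (a b ρ : ℝ) : Set ℂ :=
  {z : ℂ | ∃ y : ℝ, y ∈ Set.Icc a b ∧ ‖z - (y : ℂ)‖ < ρ}

/-- Complex `ρ`-neighborhood of the open real interval `(a,b)`. -/
def IooNbhd (a b ρ : ℝ) : Set ℂ :=
  {z : ℂ | ∃ y : ℝ, y ∈ Set.Ioo a b ∧ ‖z - (y : ℂ)‖ < ρ}

/-- Embedding of real parameter space into complex parameter space. -/
def cemb {m : ℕ} (y : EuclideanSpace ℝ (Fin m)) : EuclideanSpace ℂ (Fin m) :=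
  WithLp.toLp 2 (fun i => (y i : ℂ))

/-- Complex `r`-neighborhood of a real set `D̂ ⊆ ℝ^m` inside `ℂ^m`. -/
def DNbhd {m : ℕ} (D : Set (EuclideanSpace ℝ (Fin m))) (r : ℝ) :
    Set (EuclideanSpace ℂ (Fin m)) :=
  {z | ∃ y ∈ D, ‖z - cemb y‖ < r}

/-- Data of a `(M,β,s₀)`-Morse-non-degenerate `2π`-periodic real-analytic function, together with
its `2N` non-degenerate critical points `θ 1 < … < θ (2N) = π` in `(-π,π]` (and `θ 0 = -π`,
the translate of the global maximum `θ (2N) = π`); odd indices are minima, even indices maxima,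
and the critical values are pairwise separated by at least `β`. -/
structure MorseData (M β s₀ : ℝ) (N : ℕ) where
  F : ℂ → ℂ
  θ : ℕ → ℝ
  hol : DifferentiableOn ℂ F (Strip s₀)
  per : ∀ z : ℂ, F (z + 2 * Real.pi) = F z
  realF : ∀ x : ℝ, (F (x : ℂ)).im = 0
  bdd : ∀ z ∈ Strip s₀, ‖F z‖ ≤ M
  lower : ∀ x : ℝ, β ≤ ‖deriv F (x : ℂ)‖ + ‖iteratedDeriv 2 F (x : ℂ)‖
  mono : ∀ i j : ℕ, i < j → j ≤ 2 * N → θ i < θ j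
  first : θ 0 = -Real.pi
  last : θ (2 * N) = Real.pi
  crit : ∀ i ≤ 2 * N, deriv F ((θ i : ℝ) : ℂ) = 0
  conv : ∀ i ≤ 2 * N, i % 2 = 1 → 0 < (iteratedDeriv 2 F ((θ i : ℝ) : ℂ)).re
  conc : ∀ i ≤ 2 * N, i % 2 = 0 → (iteratedDeriv 2 F ((θ i : ℝ) : ℂ)).re < 0
  sep : ∀ i j : ℕ, 1 ≤ i → i ≤ 2 * N → 1 ≤ j → j ≤ 2 * N → i ≠ j →
    β ≤ ‖F ((θ i : ℝ) : ℂ) - F ((θ j : ℝ) : ℂ)‖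
  onlycrit : ∀ x : ℝ, -Real.pi < x → x ≤ Real.pi → deriv F ((x : ℝ) : ℂ) = 0 →
    ∃ i, i ≤ 2 * N ∧ x = θ i

/-- The threshold `η⋄ = η⋄(M,β,s₀,r₀)` of formula (4.3) in the paper. -/
def etaDiamond (M β s₀ r₀ : ℝ) : ℝ :=
  β ^ 9 * s₀ ^ 15 / (2 ^ 120 * M ^ 9) *
    min (min (r₀ ^ 2) (r₀ ^ 3 / Real.sqrt M)) (β ^ 45 * s₀ ^ 75 / (2 ^ 321 * M ^ 44))

/-!
Fix a real `p̂ ∈ D̂`, put `g = G(p̂, ·)` and let `x` be a real critical point of `g`. Cauchy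
estimates on the strip make `g' - F'` and `g'' - F''` of size `O(η)` on `ℝ`, so `F'(x)` is small.
As `|F'| + |F''| ≥ β` and `F'''` is bounded, `F''` then stays away from `0` near `x`, which forces
a critical point of `F`, i.e. a translate `θ_i + 2πk`, within `ρ = morseRadius M β s₀` of `x`.
Near each `θ_i` the same estimates keep `g''` away from `0`, so `g'` has at most one real zero
there, and hence `x - 2πk = θ_i(p̂)`. Finally `θ_0(p̂) = θ_{2N}(p̂) - 2π` while the other
`θ_i(p̂)` lie in `(θ_{2N}(p̂) - 2π, θ_{2N}(p̂)]`, so `x` is one of `θ_1(p̂), …, θ_{2N}(p̂)`.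
-/

open scoped Real

lemma isOpen_strip (s : ℝ) : IsOpen (Strip s) :=
  isOpen_lt continuous_im.abs continuous_const

lemma ofReal_mem_strip {s : ℝ} (hs : 0 < s) (t : ℝ) : (t : ℂ) ∈ Strip s := by
  simpa [Strip] using hs

lemma closedBall_ofReal_subset_strip {s R : ℝ} (hR : R < s) (t : ℝ) :
    Metric.closedBall (t : ℂ) R ⊆ Strip s := fun w hw =>
  calc |w.im| = |(w - t).im| := by simp
    _ ≤ ‖w - t‖ := abs_im_le_norm _
    _ < s := (mem_closedBall_iff_norm.1 hw).trans_lt hR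

lemma DifferentiableOn.iteratedDeriv_of_isOpen {f : ℂ → ℂ} {U : Set ℂ}
    (hf : DifferentiableOn ℂ f U) (hU : IsOpen U) (n : ℕ) :
    DifferentiableOn ℂ (iteratedDeriv n f) U := by
  induction n with
  | zero => simpa using hf
  | succ n ih => simpa [iteratedDeriv_succ] using ih.deriv hU

lemma norm_iteratedDeriv_ofReal_le {φ : ℂ → ℂ} {s C R : ℝ}
    (hφ : DifferentiableOn ℂ φ (Strip s)) (hC : ∀ z ∈ Strip s, ‖φ z‖ ≤ C)
    (hR : 0 < R) (hRs : R < s) (n : ℕ) (t : ℝ) :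
    ‖iteratedDeriv n φ t‖ ≤ n.factorial * C / R ^ n := by
  have hball := closedBall_ofReal_subset_strip hRs t
  refine Complex.norm_iteratedDeriv_le_of_forall_mem_sphere_norm_le n hR ?_
    fun z hz => hC z (hball (Metric.sphere_subset_closedBall hz))
  exact (hφ.mono hball).diffContOnCl_ball subset_rfl

lemma norm_iteratedDeriv_sub_ofReal_le {f g : ℂ → ℂ} {s η R : ℝ}
    (hf : DifferentiableOn ℂ f (Strip s)) (hg : DifferentiableOn ℂ g (Strip s))
    (hfg : ∀ z ∈ Strip s, ‖f z - g z‖ ≤ η) (hR : 0 < R) (hRs : R < s) (n : ℕ) (t : ℝ) :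
    ‖iteratedDeriv n f t - iteratedDeriv n g t‖ ≤ n.factorial * η / R ^ n := by
  have ht : Strip s ∈ nhds (t : ℂ) :=
    (isOpen_strip s).mem_nhds (ofReal_mem_strip (hR.trans hRs) t)
  rw [← iteratedDeriv_sub ((hf.contDiffOn (isOpen_strip s)).contDiffAt ht)
    ((hg.contDiffOn (isOpen_strip s)).contDiffAt ht)]
  exact norm_iteratedDeriv_ofReal_le (hf.sub hg) hfg hR hRs n t

lemma im_deriv_ofReal_eq_zero {φ : ℂ → ℂ} {t : ℝ} (hφ : DifferentiableAt ℂ φ t)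
    (hreal : ∀ x : ℝ, (φ x).im = 0) : (deriv φ t).im = 0 := by
  have h := (hφ.hasDerivAt.const_mul (-I)).real_of_complex
  simp only [neg_mul, neg_re, mul_re, I_re, zero_mul, I_im, one_mul, zero_sub, neg_neg,
    hreal] at h
  simpa using h.unique (hasDerivAt_const (t : ℝ) (0 : ℝ))

lemma im_iteratedDeriv_ofReal_eq_zero {φ : ℂ → ℂ} {s : ℝ} (hs : 0 < s)
    (hφ : DifferentiableOn ℂ φ (Strip s)) (hreal : ∀ x : ℝ, (φ x).im = 0) (n : ℕ) (t : ℝ) :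
    (iteratedDeriv n φ t).im = 0 := by
  induction n generalizing t with
  | zero => simpa using hreal t
  | succ n ih =>
    rw [iteratedDeriv_succ]
    exact im_deriv_ofReal_eq_zero
      ((hφ.iteratedDeriv_of_isOpen (isOpen_strip s) n).differentiableAt
        ((isOpen_strip s).mem_nhds (ofReal_mem_strip hs t))) ih

lemma norm_sub_le_of_norm_deriv_ofReal_le {φ : ℂ → ℂ} {T : ℝ}
    (hφ : ∀ t : ℝ, DifferentiableAt ℂ φ t) (hT : ∀ t : ℝ, ‖deriv φ t‖ ≤ T) (a b : ℝ) :
    ‖φ b - φ a‖ ≤ T * |b - a| := by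
  simpa [Real.norm_eq_abs] using Convex.norm_image_sub_le_of_norm_hasDerivWithin_le
    (f := fun t : ℝ => φ t) (fun t _ => (hφ t).hasDerivAt.comp_ofReal.hasDerivWithinAt)
    (fun t _ => hT t) convex_univ (mem_univ a) (mem_univ b)

lemma hasDerivAt_re_iteratedDeriv_ofReal {φ : ℂ → ℂ} {s : ℝ} (hs : 0 < s)
    (hφ : DifferentiableOn ℂ φ (Strip s)) (n : ℕ) (t : ℝ) :
    HasDerivAt (fun x : ℝ => (iteratedDeriv n φ x).re) (iteratedDeriv (n + 1) φ t).re t := by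
  rw [iteratedDeriv_succ]
  exact ((hφ.iteratedDeriv_of_isOpen (isOpen_strip s) n).differentiableAt
    ((isOpen_strip s).mem_nhds (ofReal_mem_strip hs t))).hasDerivAt.real_of_complex

lemma Function.Periodic.deriv {φ : ℂ → ℂ} {c : ℂ} (h : Function.Periodic φ c) :
    Function.Periodic (deriv φ) c := fun z => by
  rw [← deriv_comp_add_const, show (fun w => φ (w + c)) = φ from funext h]

lemma injOn_of_hasDerivAt_ne_zero {v w : ℝ → ℝ} {a b : ℝ}
    (hv : ∀ t ∈ Icc a b, HasDerivAt v (w t) t) (hw : ∀ t ∈ Icc a b, w t ≠ 0) :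
    InjOn v (Icc a b) := by
  have key : ∀ t₁ ∈ Icc a b, ∀ t₂ ∈ Icc a b, t₁ < t₂ → v t₁ ≠ v t₂ := by
    intro t₁ h₁ t₂ h₂ hlt heq
    have hsub : Icc t₁ t₂ ⊆ Icc a b := Icc_subset_Icc h₁.1 h₂.2
    obtain ⟨c, hc, hwc⟩ := exists_hasDerivAt_eq_zero hlt
      (fun t ht => (hv t (hsub ht)).continuousAt.continuousWithinAt) heq
      (fun t ht => hv t (hsub (Ioo_subset_Icc_self ht)))
    exact hw c (hsub (Ioo_subset_Icc_self hc)) hwc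
  intro t₁ h₁ t₂ h₂ heq
  by_contra hne
  rcases lt_or_gt_of_ne hne with hlt | hlt
  · exact key t₁ h₁ t₂ h₂ hlt heq
  · exact key t₂ h₂ t₁ h₁ hlt heq.symm

lemma exists_eq_zero_of_le_deriv {v w : ℝ → ℝ} {x d c : ℝ} (hd : 0 < d)
    (hv : ∀ t ∈ Icc (x - d) (x + d), HasDerivAt v (w t) t)
    (hw : ∀ t ∈ Icc (x - d) (x + d), c ≤ w t) (hvx : |v x| < c * d) :
    ∃ y ∈ Ioo (x - d) (x + d), v y = 0 := by
  have hcont : ContinuousOn v (Icc (x - d) (x + d)) :=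
    fun t ht => (hv t ht).continuousAt.continuousWithinAt
  have hslope := (convex_Icc (x - d) (x + d)).mul_sub_le_image_sub_of_le_deriv hcont
    (fun t ht => (hv t (interior_subset ht)).differentiableAt.differentiableWithinAt)
    (fun t ht => (hv t (interior_subset ht)).deriv ▸ hw t (interior_subset ht))
  have hxI : x ∈ Icc (x - d) (x + d) := ⟨by linarith, by linarith⟩
  have hleft := hslope (x - d) (left_mem_Icc.2 (by linarith)) x hxI (by linarith)
  have hright := hslope x hxI (x + d) (right_mem_Icc.2 (by linarith)) (by linarith)
  obtain ⟨hvx₁, hvx₂⟩ := abs_lt.1 hvx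
  exact intermediate_value_Ioo (by linarith) hcont ⟨by nlinarith, by nlinarith⟩

lemma exists_eq_zero_of_le_abs_deriv {v w : ℝ → ℝ} {x d c : ℝ} (hd : 0 < d)
    (hv : ∀ t ∈ Icc (x - d) (x + d), HasDerivAt v (w t) t)
    (hw : ∀ t ∈ Icc (x - d) (x + d), c ≤ |w t|) (hvx : |v x| < c * d) :
    ∃ y ∈ Ioo (x - d) (x + d), v y = 0 := by
  have hc : 0 < c := pos_of_mul_pos_left ((abs_nonneg _).trans_lt hvx) hd.le
  rcases hasDerivWithinAt_forall_lt_or_forall_gt_of_forall_ne (convex_Icc (x - d) (x + d))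
    (fun t ht => (hv t ht).hasDerivWithinAt) (m := 0)
    (fun t ht => abs_pos.1 (hc.trans_le (hw t ht))) with hneg | hpos
  · obtain ⟨y, hy, hvy⟩ := exists_eq_zero_of_le_deriv hd (v := fun t => -v t)
      (w := fun t => -w t) (fun t ht => (hv t ht).neg)
      (fun t ht => by simpa [abs_of_neg (hneg t ht)] using hw t ht)
      (by simpa using hvx)
    exact ⟨y, hy, neg_eq_zero.1 hvy⟩
  · exact exists_eq_zero_of_le_deriv hd hv
      (fun t ht => by simpa [abs_of_pos (hpos t ht)] using hw t ht) hvx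

section IntervalMod

variable {α : Type*} [AddCommGroup α] [LinearOrder α] [IsOrderedAddMonoid α] [Archimedean α]
  {p : α}

lemma eq_of_mem_Ioc_of_eq_add_zsmul (hp : 0 < p) {a b c : α} (hb : b ∈ Ioc (a - p) a)
    (hc : c ∈ Ioc (a - p) a) {k : ℤ} (h : c = b + k • p) : c = b := by
  have hmod : ∀ y ∈ Ioc (a - p) a, toIocMod hp (a - p) y = y :=
    fun y hy => (toIocMod_eq_self hp).2 (by simpa using hy)
  rw [← hmod c hc, h, toIocMod_add_zsmul, hmod b hb]

lemma exists_eq_of_eq_add_zsmul (hp : 0 < p) {n : ℕ} (hn : 1 ≤ n) {Y : ℕ → α}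
    (hY0 : Y 0 + p = Y n) (hY : ∀ j, 1 ≤ j → j < n → Y j ∈ Ioc (Y n - p) (Y n))
    {x : α} (hx : x ∈ Ioc (Y n - p) (Y n)) {i : ℕ} (hi : i ≤ n) {k : ℤ}
    (hxk : x = Y i + k • p) : ∃ j, 1 ≤ j ∧ j ≤ n ∧ x = Y j := by
  have hYn : Y n ∈ Ioc (Y n - p) (Y n) := ⟨sub_lt_self _ hp, le_rfl⟩
  rcases Nat.eq_zero_or_pos i with rfl | hi₀
  · refine ⟨n, hn, le_rfl, eq_of_mem_Ioc_of_eq_add_zsmul hp hYn hx (k := k - 1) ?_⟩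
    rw [hxk, ← hY0, sub_zsmul, one_zsmul]; abel
  · rcases hi.lt_or_eq with hin | rfl
    · exact ⟨i, hi₀, hi, eq_of_mem_Ioc_of_eq_add_zsmul hp (hY i hi₀ hin) hx hxk⟩
    · exact ⟨i, hi₀, le_rfl, eq_of_mem_Ioc_of_eq_add_zsmul hp hYn hx hxk⟩

end IntervalMod

lemma etaDiamond_le {M β s₀ r₀ : ℝ} (hM : 0 < M) (hβ : 0 < β) (hs : 0 < s₀)
    (h₁ : β * s₀ ≤ 2 * M) (h₂ : β * s₀ ^ 2 ≤ 8 * M) :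
    etaDiamond M β s₀ r₀ ≤ β * s₀ / 2 ^ 10 ∧
      etaDiamond M β s₀ r₀ * M ≤ β ^ 2 * s₀ ^ 4 / 2 ^ 10 := by
  have hpow : ∀ m n : ℕ, m + 3 * n + 10 ≤ 441 →
      (2 : ℝ) ^ m * 8 ^ n * 2 ^ 10 ≤ 2 ^ 120 * 2 ^ 321 := fun m n h => by
    rw [show (8 : ℝ) = 2 ^ 3 by norm_num, ← pow_mul, ← pow_add, ← pow_add, ← pow_add]
    exact pow_le_pow_right₀ (by norm_num) (by omega)
  have hpow₁ := hpow 17 36 (by norm_num)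
  have hpow₂ := hpow 18 34 (by norm_num)
  have ha : β * s₀ / M ≤ 2 := by rw [div_le_iff₀ hM]; linarith
  have hb : β * s₀ ^ 2 / M ≤ 8 := by rw [div_le_iff₀ hM]; linarith
  unfold etaDiamond
  -- kept symbolic: `ring` and `norm_num` refuse to evaluate a power as large as `2 ^ 321`
  generalize hc₁ : (2 : ℝ) ^ 120 = c₁ at hpow₁ hpow₂
  generalize hc₂ : (2 : ℝ) ^ 321 = c₂ at hpow₁ hpow₂
  have hc₁₀ : 0 < c₁ := hc₁ ▸ by positivity
  have hc₂₀ : 0 < c₂ := hc₂ ▸ by positivity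
  have hprod : β ^ 9 * s₀ ^ 15 / (c₁ * M ^ 9) *
      min (min (r₀ ^ 2) (r₀ ^ 3 / √M)) (β ^ 45 * s₀ ^ 75 / (c₂ * M ^ 44)) ≤
      β ^ 54 * s₀ ^ 90 / (c₁ * c₂ * M ^ 53) :=
    calc _ ≤ β ^ 9 * s₀ ^ 15 / (c₁ * M ^ 9) * (β ^ 45 * s₀ ^ 75 / (c₂ * M ^ 44)) := by
          gcongr; exact min_le_right _ _
      _ = _ := by field_simp
  constructor
  · calc _ ≤ β * s₀ * (β * s₀ / M) ^ 17 * (β * s₀ ^ 2 / M) ^ 36 / (c₁ * c₂) :=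
          hprod.trans_eq (by field_simp)
      _ ≤ β * s₀ * 2 ^ 17 * 8 ^ 36 / (c₁ * c₂) := by gcongr
      _ ≤ β * s₀ / 2 ^ 10 := by
          rw [div_le_div_iff₀ (by positivity) (by positivity)]
          nlinarith [mul_pos hβ hs]
  · calc _ ≤ β ^ 2 * s₀ ^ 4 * (β * s₀ / M) ^ 18 * (β * s₀ ^ 2 / M) ^ 34 / (c₁ * c₂) := by
          rw [← le_div_iff₀ hM]; exact hprod.trans_eq (by field_simp)
      _ ≤ β ^ 2 * s₀ ^ 4 * 2 ^ 18 * 8 ^ 34 / (c₁ * c₂) := by gcongr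
      _ ≤ β ^ 2 * s₀ ^ 4 / 2 ^ 10 := by
          rw [div_le_div_iff₀ (by positivity) (by positivity)]
          nlinarith [mul_pos (pow_pos hβ 2) (pow_pos hs 4)]

/-- `β / (4 T)`, where `T = 48 M / s₀³` is the Cauchy bound for `F'''` on `ℝ`: over this distance
`F''` moves by at most `β / 4`. -/
def morseRadius (M β s₀ : ℝ) : ℝ := β * s₀ ^ 3 / (192 * M)

namespace MorseData

variable {M β s₀ : ℝ} {N : ℕ} (md : MorseData M β s₀ N)

lemma N_pos (md : MorseData M β s₀ N) : 0 < N := by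
  have h : md.θ 0 < md.θ (2 * N) := by rw [md.first, md.last]; linarith [Real.pi_pos]
  by_contra! hN
  simp [Nat.le_zero.1 hN] at h

lemma norm_iteratedDeriv_le (hs : 0 < s₀) (n : ℕ) (t : ℝ) :
    ‖iteratedDeriv n md.F t‖ ≤ n.factorial * M / (s₀ / 2) ^ n :=
  norm_iteratedDeriv_ofReal_le md.hol md.bdd (half_pos hs) (half_lt_self hs) n t

lemma im_iteratedDeriv_eq_zero (hs : 0 < s₀) (n : ℕ) (t : ℝ) :
    (iteratedDeriv n md.F t).im = 0 :=
  im_iteratedDeriv_ofReal_eq_zero hs md.hol md.realF n t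

lemma exists_iteratedDeriv_two_eq_zero (hs : 0 < s₀) : ∃ ξ : ℝ, iteratedDeriv 2 md.F ξ = 0 := by
  have hcrit : ∀ j ≤ 2 * N, (iteratedDeriv 1 md.F (md.θ j)).re = 0 := fun j hj => by
    simp [iteratedDeriv_one, md.crit j hj]
  obtain ⟨ξ, -, hξ⟩ := exists_hasDerivAt_eq_zero
    (md.mono 0 (2 * N) (by linarith [md.N_pos]) le_rfl)
    (fun t _ => (hasDerivAt_re_iteratedDeriv_ofReal hs md.hol 1 t).continuousAt.continuousWithinAt)
    ((hcrit 0 (Nat.zero_le _)).trans (hcrit _ le_rfl).symm)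
    (fun t _ => hasDerivAt_re_iteratedDeriv_ofReal hs md.hol 1 t)
  exact ⟨ξ, Complex.ext hξ (md.im_iteratedDeriv_eq_zero hs 2 ξ)⟩

lemma beta_mul_le (md : MorseData M β s₀ N) (hs : 0 < s₀) : β * s₀ ≤ 2 * M := by
  obtain ⟨ξ, hξ⟩ := md.exists_iteratedDeriv_two_eq_zero hs
  have h := (md.lower ξ).trans (by simpa [hξ] using md.norm_iteratedDeriv_le hs 1 ξ)
  rw [le_div_iff₀ (by positivity)] at h
  linarith

lemma beta_mul_sq_le (md : MorseData M β s₀ N) (hs : 0 < s₀) : β * s₀ ^ 2 ≤ 8 * M := by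
  have h := (md.lower (md.θ 0)).trans
    (by simpa [md.crit 0 (Nat.zero_le _)] using md.norm_iteratedDeriv_le hs 2 (md.θ 0))
  rw [le_div_iff₀ (by positivity)] at h
  nlinarith

lemma M_pos (md : MorseData M β s₀ N) (hβ : 0 < β) (hs : 0 < s₀) : 0 < M := by
  nlinarith [md.beta_mul_le hs, mul_pos hβ hs]

lemma morseRadius_pos (md : MorseData M β s₀ N) (hβ : 0 < β) (hs : 0 < s₀) :
    0 < morseRadius M β s₀ := by
  have := md.M_pos hβ hs
  unfold morseRadius; positivity

lemma le_norm_iteratedDeriv_two (hβ : 0 < β) (hs : 0 < s₀) {a t : ℝ}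
    (ht : |t - a| ≤ morseRadius M β s₀) :
    3 * β / 4 - ‖deriv md.F a‖ ≤ ‖iteratedDeriv 2 md.F t‖ := by
  have hM := md.M_pos hβ hs
  have hlip := norm_sub_le_of_norm_deriv_ofReal_le (φ := iteratedDeriv 2 md.F)
    (fun x => ((md.hol.iteratedDeriv_of_isOpen (isOpen_strip s₀) 2).differentiableAt
      ((isOpen_strip s₀).mem_nhds (ofReal_mem_strip hs x))))
    (fun x => by simpa [← iteratedDeriv_succ] using md.norm_iteratedDeriv_le hs 3 x) a t
  have hmove : ‖iteratedDeriv 2 md.F a - iteratedDeriv 2 md.F t‖ ≤ β / 4 :=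
    calc _ ≤ (3 : ℕ).factorial * M / (s₀ / 2) ^ 3 * |t - a| := by rw [norm_sub_rev]; exact hlip
      _ ≤ (3 : ℕ).factorial * M / (s₀ / 2) ^ 3 * morseRadius M β s₀ := by gcongr
      _ = β / 4 := by unfold morseRadius; simp [Nat.factorial]; field_simp; ring
  have := md.lower a
  have := norm_sub_norm_le (iteratedDeriv 2 md.F a) (iteratedDeriv 2 md.F t)
  linarith

lemma subsingleton_crit_near (hβ : 0 < β) (hs : 0 < s₀) {g : ℂ → ℂ} {η : ℝ}
    (hg : DifferentiableOn ℂ g (Strip s₀)) (hgreal : ∀ x : ℝ, (g x).im = 0)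
    (hgF : ∀ z ∈ Strip s₀, ‖g z - md.F z‖ ≤ η) (hη : 8 * η / s₀ ^ 2 < 3 * β / 4)
    {a : ℝ} (ha : deriv md.F a = 0) :
    {t : ℝ | |t - a| ≤ morseRadius M β s₀ ∧ deriv g t = 0}.Subsingleton := by
  set ρ := morseRadius M β s₀
  have hmem : ∀ t : ℝ, |t - a| ≤ ρ ↔ t ∈ Icc (a - ρ) (a + ρ) := fun t => by
    rw [abs_sub_comm, mem_Icc_iff_abs_le]
  have hw : ∀ t ∈ Icc (a - ρ) (a + ρ), (iteratedDeriv 2 g t).re ≠ 0 := by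
    intro t ht
    have hF := md.le_norm_iteratedDeriv_two hβ hs ((hmem t).2 ht)
    have hgF₂ := norm_iteratedDeriv_sub_ofReal_le hg md.hol hgF (half_pos hs) (half_lt_self hs) 2 t
    have h8 : (Nat.factorial 2 : ℝ) * η / (s₀ / 2) ^ 2 = 8 * η / s₀ ^ 2 := by
      simp [Nat.factorial]; field_simp; ring
    have := norm_sub_norm_le (iteratedDeriv 2 md.F t) (iteratedDeriv 2 g t)
    rw [norm_sub_rev] at this
    rw [ha, norm_zero, sub_zero] at hF
    rw [← abs_pos, abs_re_eq_norm.2 (im_iteratedDeriv_ofReal_eq_zero hs hg hgreal 2 t)]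
    linarith
  intro t₁ h₁ t₂ h₂
  refine injOn_of_hasDerivAt_ne_zero (v := fun x : ℝ => (iteratedDeriv 1 g x).re)
    (fun t _ => hasDerivAt_re_iteratedDeriv_ofReal hs hg 1 t) hw ((hmem t₁).1 h₁.1)
    ((hmem t₂).1 h₂.1) ?_
  simp [iteratedDeriv_one, h₁.2, h₂.2]

lemma morseRadius_lt_abs_sub (hβ : 0 < β) (hs : 0 < s₀) {a b : ℝ} (ha : deriv md.F a = 0)
    (hb : deriv md.F b = 0) (hab : a ≠ b) : morseRadius M β s₀ < |b - a| := by
  by_contra! h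
  refine hab (md.subsingleton_crit_near hβ hs md.hol md.realF (η := 0) (by simp)
    (by simpa using hβ) ha ⟨?_, ha⟩ ⟨h, hb⟩)
  simpa using (md.morseRadius_pos hβ hs).le

lemma neg_pi_add_morseRadius_lt (hβ : 0 < β) (hs : 0 < s₀) {j : ℕ} (hj₁ : 1 ≤ j)
    (hj : j ≤ 2 * N) : -π + morseRadius M β s₀ < md.θ j := by
  have hlt := md.mono 0 j hj₁ hj
  have := md.morseRadius_lt_abs_sub hβ hs (md.crit 0 (Nat.zero_le _)) (md.crit j hj) hlt.ne
  rw [abs_of_pos (sub_pos.2 hlt), md.first] at this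
  linarith

lemma theta_lt_pi_sub_morseRadius (hβ : 0 < β) (hs : 0 < s₀) {j : ℕ} (hj : j < 2 * N) :
    md.θ j < π - morseRadius M β s₀ := by
  have hlt := md.mono j (2 * N) hj le_rfl
  have := md.morseRadius_lt_abs_sub hβ hs (md.crit j hj.le) (md.crit _ le_rfl) hlt.ne
  rw [abs_of_pos (sub_pos.2 hlt), md.last] at this
  linarith

lemma exists_crit_near (hβ : 0 < β) (hs : 0 < s₀) {x : ℝ} (hx₁ : ‖deriv md.F x‖ ≤ β / 4)
    (hx₂ : ‖deriv md.F x‖ < β * morseRadius M β s₀ / 2) :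
    ∃ y : ℝ, |y - x| < morseRadius M β s₀ ∧ deriv md.F y = 0 := by
  have hre : ∀ n (t : ℝ), |(iteratedDeriv n md.F t).re| = ‖iteratedDeriv n md.F t‖ :=
    fun n t => abs_re_eq_norm.2 (md.im_iteratedDeriv_eq_zero hs n t)
  obtain ⟨y, hy, hy₀⟩ := exists_eq_zero_of_le_abs_deriv (md.morseRadius_pos hβ hs) (c := β / 2)
    (fun t _ => hasDerivAt_re_iteratedDeriv_ofReal hs md.hol 1 t)
    (fun t ht => by
      have := md.le_norm_iteratedDeriv_two hβ hs (a := x) (t := t)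
        (by rw [abs_sub_comm]; exact mem_Icc_iff_abs_le.2 ht)
      rw [hre]; linarith)
    (by rw [hre, iteratedDeriv_one]; linarith)
  refine ⟨y, ?_, ?_⟩
  · rw [abs_sub_lt_iff]; constructor <;> linarith [hy.1, hy.2]
  · rw [← iteratedDeriv_one]
    exact Complex.ext hy₀ (md.im_iteratedDeriv_eq_zero hs 1 y)

lemma exists_theta_near (hβ : 0 < β) (hs : 0 < s₀) {x : ℝ} (hx₁ : ‖deriv md.F x‖ ≤ β / 4)
    (hx₂ : ‖deriv md.F x‖ < β * morseRadius M β s₀ / 2) :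
    ∃ i ≤ 2 * N, ∃ k : ℤ, |x - k • (2 * π) - md.θ i| < morseRadius M β s₀ := by
  obtain ⟨y, hyx, hy₀⟩ := md.exists_crit_near hβ hs hx₁ hx₂
  have h2π : 0 < 2 * π := by positivity
  set k := toIocDiv h2π (-π) y
  have hmem := toIocMod_mem_Ioc h2π (-π) y
  rw [← self_sub_toIocDiv_zsmul] at hmem
  have hcrit : deriv md.F ((y - k • (2 * π) : ℝ) : ℂ) = 0 := by
    rw [zsmul_eq_mul]; push_cast
    rw [(Function.Periodic.deriv md.per).sub_int_mul_eq, hy₀]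
  obtain ⟨i, hi, hθ⟩ := md.onlycrit _ hmem.1 (by linarith [hmem.2]) hcrit
  refine ⟨i, hi, k, ?_⟩
  rw [← hθ, abs_sub_comm]
  convert hyx using 2; ring

theorem exists_eq_of_deriv_eq_zero (hβ : 0 < β) (hs : 0 < s₀) {g : ℂ → ℂ} {η ε : ℝ}
    (hg : DifferentiableOn ℂ g (Strip s₀)) (hgreal : ∀ x : ℝ, (g x).im = 0)
    (hgper : Function.Periodic g (2 * π)) (hgF : ∀ z ∈ Strip s₀, ‖g z - md.F z‖ ≤ η)
    (hη₁ : 2 * η / s₀ ≤ β / 4) (hη₂ : 2 * η / s₀ < β * morseRadius M β s₀ / 2)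
    (hη₃ : 8 * η / s₀ ^ 2 < 3 * β / 4) (hε : 2 * ε ≤ morseRadius M β s₀)
    {Y : ℕ → ℝ} (hY : ∀ j ≤ 2 * N, |Y j - md.θ j| ≤ ε ∧ deriv g (Y j) = 0)
    {x : ℝ} (hx : x ∈ Ioc (Y (2 * N) - 2 * π) (Y (2 * N))) (hx₀ : deriv g x = 0) :
    ∃ j, 1 ≤ j ∧ j ≤ 2 * N ∧ x = Y j := by
  have hFx : ‖deriv md.F x‖ ≤ 2 * η / s₀ := by
    simpa [hx₀, iteratedDeriv_one, div_div_eq_mul_div, mul_comm] using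
      norm_iteratedDeriv_sub_ofReal_le hg md.hol hgF (half_pos hs) (half_lt_self hs) 1 x
  obtain ⟨i, hi, k, hxk⟩ := md.exists_theta_near hβ hs (hFx.trans hη₁) (hFx.trans_lt hη₂)
  have hunique : ∀ j ≤ 2 * N,
      {t : ℝ | |t - md.θ j| ≤ morseRadius M β s₀ ∧ deriv g t = 0}.Subsingleton := fun j hj =>
    md.subsingleton_crit_near hβ hs hg hgreal hgF hη₃ (md.crit j hj)
  have hg'per : ∀ (t : ℝ) (k : ℤ), deriv g ((t + k • (2 * π) : ℝ) : ℂ) = deriv g t := by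
    intro t k; rw [zsmul_eq_mul]; push_cast; exact hgper.deriv.int_mul k t
  have hε₀ : 0 ≤ ε := (abs_nonneg _).trans (hY 0 (Nat.zero_le _)).1
  have hxi : x - k • (2 * π) = Y i := hunique i hi
    ⟨hxk.le, by rw [← hg'per _ k, sub_add_cancel, hx₀]⟩
    ⟨(hY i hi).1.trans (by linarith), (hY i hi).2⟩
  have hY0near : |Y 0 + 2 * π - md.θ (2 * N)| ≤ morseRadius M β s₀ := by
    rw [md.last, show Y 0 + 2 * π - π = Y 0 - md.θ 0 by rw [md.first]; ring]
    linarith [(hY 0 (Nat.zero_le _)).1]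
  have hY0 : Y 0 + 2 * π = Y (2 * N) := hunique _ le_rfl
    ⟨hY0near, by simpa using (hg'per (Y 0) 1).trans (hY 0 (Nat.zero_le _)).2⟩
    ⟨(hY _ le_rfl).1.trans (by linarith), (hY _ le_rfl).2⟩
  refine exists_eq_of_eq_add_zsmul (p := 2 * π) (Y := Y) (by positivity)
    (by linarith [md.N_pos]) hY0 (fun j hj₁ hj => ?_) hx hi (k := k) (by rw [← hxi]; abel)
  have hYj := abs_le.1 (hY j hj.le).1
  have hYN := abs_le.1 (hY _ le_rfl).1
  have := md.neg_pi_add_morseRadius_lt hβ hs hj₁ hj.le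
  have := md.theta_lt_pi_sub_morseRadius hβ hs hj
  rw [md.last] at hYN
  constructor <;> linarith

lemma bounds_of_le_etaDiamond (md : MorseData M β s₀ N) (hβ : 0 < β) (hs : 0 < s₀) {η r₀ : ℝ}
    (hη : η ≤ etaDiamond M β s₀ r₀) :
    2 * η / s₀ ≤ β / 4 ∧ 2 * η / s₀ < β * morseRadius M β s₀ / 2 ∧
      8 * η / s₀ ^ 2 < 3 * β / 4 ∧ 2 * (2 * η / (β * s₀)) ≤ morseRadius M β s₀ := by
  have hM := md.M_pos hβ hs
  obtain ⟨h₁, h₂⟩ := etaDiamond_le (r₀ := r₀) hM hβ hs (md.beta_mul_le hs) (md.beta_mul_sq_le hs)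
  have hη₁ : η ≤ β * s₀ / 2 ^ 10 := hη.trans h₁
  have hη₂ : η * M ≤ β ^ 2 * s₀ ^ 4 / 2 ^ 10 := (mul_le_mul_of_nonneg_right hη hM.le).trans h₂
  have hη₃ : η ≤ β * s₀ ^ 2 / 2 ^ 7 := by
    rw [← mul_le_mul_iff_left₀ hM]
    nlinarith [md.beta_mul_sq_le hs, mul_pos hβ (pow_pos hs 2)]
  unfold morseRadius
  refine ⟨?_, ?_, ?_, ?_⟩
  · rw [div_le_div_iff₀ hs (by norm_num)]; linarith [mul_pos hβ hs]
  · rw [mul_div_assoc', div_div, div_lt_div_iff₀ hs (by positivity)]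
    nlinarith [mul_pos (pow_pos hβ 2) (pow_pos hs 4)]
  · rw [div_lt_div_iff₀ (by positivity) (by norm_num)]
    nlinarith [mul_pos hβ (pow_pos hs 2)]
  · rw [mul_div_assoc', div_le_div_iff₀ (by positivity) (by positivity)]
    nlinarith [mul_pos (pow_pos hβ 2) (pow_pos hs 4)]

end MorseData

theorem statement_5_general (m N : ℕ) (M β s₀ r₀ η : ℝ)
    (hβ : 0 < β) (hs : 0 < s₀) (hr : 0 < r₀)
    (md : MorseData M β s₀ N)
    (D : Set (EuclideanSpace ℝ (Fin m)))
    (G : EuclideanSpace ℂ (Fin m) → ℂ → ℂ)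
    (hGhol : DifferentiableOn ℂ (fun w : EuclideanSpace ℂ (Fin m) × ℂ => G w.1 w.2)
      ((DNbhd D r₀) ×ˢ Strip s₀))
    (hGper : ∀ ph, ∀ q : ℂ, G ph (q + 2 * Real.pi) = G ph q)
    (hGreal : ∀ ph ∈ D, ∀ x : ℝ, (G (cemb ph) (x : ℂ)).im = 0)
    (hGF : ∀ ph ∈ DNbhd D r₀, ∀ q ∈ Strip s₀, ‖G ph q - md.F q‖ ≤ η)
    (hη : η ≤ etaDiamond M β s₀ r₀)
    -- the continued critical points `θ_i(p̂)` of `G(·,p̂)`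
    (θc : ℕ → EuclideanSpace ℂ (Fin m) → ℂ)
    (hθc : ∀ i ≤ 2 * N, DifferentiableOn ℂ (θc i) (DNbhd D r₀) ∧
      ∀ ph ∈ DNbhd D r₀, ‖θc i ph - (md.θ i : ℂ)‖ ≤ 2 * η / (β * s₀) ∧
        deriv (G ph) (θc i ph) = 0)
    (hθreal : ∀ i ≤ 2 * N, ∀ ph ∈ D, (θc i (cemb ph)).im = 0) :
    ∀ ph ∈ D, ∀ x : ℝ,
      (θc (2 * N) (cemb ph)).re - 2 * Real.pi < x →
      x ≤ (θc (2 * N) (cemb ph)).re →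
      deriv (G (cemb ph)) (x : ℂ) = 0 →
      ∃ i, 1 ≤ i ∧ i ≤ 2 * N ∧ (x : ℂ) = θc i (cemb ph) := by
  intro ph hph x hxl hxr hx₀
  have hp : cemb ph ∈ DNbhd D r₀ := ⟨ph, hph, by simpa using hr⟩
  have hg : DifferentiableOn ℂ (G (cemb ph)) (Strip s₀) :=
    hGhol.comp ((differentiableOn_const _).prodMk differentiableOn_id) fun q hq => ⟨hp, hq⟩
  have hθc_re : ∀ j ≤ 2 * N, ((θc j (cemb ph)).re : ℂ) = θc j (cemb ph) :=
    fun j hj => Complex.ext rfl (by simp [hθreal j hj ph hph])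
  have hY : ∀ j ≤ 2 * N, |(θc j (cemb ph)).re - md.θ j| ≤ 2 * η / (β * s₀) ∧
      deriv (G (cemb ph)) (θc j (cemb ph)).re = 0 := fun j hj =>
    ⟨by simpa using (abs_re_le_norm _).trans ((hθc j hj).2 _ hp).1,
      by rw [hθc_re j hj]; exact ((hθc j hj).2 _ hp).2⟩
  obtain ⟨hη₁, hη₂, hη₃, hε⟩ := md.bounds_of_le_etaDiamond hβ hs hη
  obtain ⟨j, hj₁, hj, hxj⟩ := md.exists_eq_of_deriv_eq_zero hβ hs hg (hGreal ph hph) (hGper _)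
    (hGF _ hp) hη₁ hη₂ hη₃ hε hY ⟨hxl, hxr⟩ hx₀
  exact ⟨j, hj₁, hj, by rw [hxj, hθc_re j hj]⟩

/-- Lemma `paradisecity`: for real `p̂ ∈ D̂`, the perturbed potential
`θ ↦ G(θ,p̂)` has no critical points other than `θ₁(p̂), …, θ_{2N}(p̂)`. -/
theorem statement_5 (m N : ℕ) (M β s₀ r₀ η : ℝ)
    (hM : 0 < M) (hβ : 0 < β) (hs : 0 < s₀) (hr : 0 < r₀) (hN : 0 < N) (hη0 : 0 ≤ η)
    (md : MorseData M β s₀ N)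
    (D : Set (EuclideanSpace ℝ (Fin m)))
    (G : EuclideanSpace ℂ (Fin m) → ℂ → ℂ)
    (hGhol : DifferentiableOn ℂ (fun w : EuclideanSpace ℂ (Fin m) × ℂ => G w.1 w.2)
      ((DNbhd D r₀) ×ˢ Strip s₀))
    (hGper : ∀ ph, ∀ q : ℂ, G ph (q + 2 * Real.pi) = G ph q)
    (hGreal : ∀ ph ∈ D, ∀ x : ℝ, (G (cemb ph) (x : ℂ)).im = 0)
    (hGF : ∀ ph ∈ DNbhd D r₀, ∀ q ∈ Strip s₀, ‖G ph q - md.F q‖ ≤ η)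
    (hη : η ≤ etaDiamond M β s₀ r₀)
    -- the continued critical points `θ_i(p̂)` of `G(·,p̂)`
    (θc : ℕ → EuclideanSpace ℂ (Fin m) → ℂ)
    (hθc : ∀ i ≤ 2 * N, DifferentiableOn ℂ (θc i) (DNbhd D r₀) ∧
      ∀ ph ∈ DNbhd D r₀, ‖θc i ph - (md.θ i : ℂ)‖ ≤ 2 * η / (β * s₀) ∧
        deriv (G ph) (θc i ph) = 0)
    (hθreal : ∀ i ≤ 2 * N, ∀ ph ∈ D, (θc i (cemb ph)).im = 0) :
    ∀ ph ∈ D, ∀ x : ℝ,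
      (θc (2 * N) (cemb ph)).re - 2 * Real.pi < x →
      x ≤ (θc (2 * N) (cemb ph)).re →
      deriv (G (cemb ph)) (x : ℂ) = 0 →
      ∃ i, 1 ≤ i ∧ i ≤ 2 * N ∧ (x : ℂ) = θc i (cemb ph) :=
  statement_5_general m N M β s₀ r₀ η hβ hs hr md D G hGhol hGper hGreal hGF hη θc hθc hθreal
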